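/- arXiv:2004.02890 — 2 statements merged into one kernel-verified Lean document; each statement's English description precedes it below -/
import Mathlib

section
/- Let A = R[x_1,…,x_n] ⊗ Λ_R[θ_1,…,θ_n] over a field R of characteristic zero, and Δ = Σ_i ∂_{x_i}∂_{θ_i} the BV Laplacian. Fix a multi-index I ⊆ {1,…,n} with |I| = k and a homogeneous polynomial f ∈ R[x_1,…,x_n] of degree d, and suppose d + n − k > 0. Define h(f·θ_I) := (d + n − k)^{−1} Σ_{a=1}^n x_a·f·θ_a·θ_I, where θ_I = θ_{i_1}⋯θ_{i_k}. Then (Δ∘h + h∘Δ)(f·θ_I) = f·θ_I, where on the right-hand side of hΔ the same formula for h is applied to each bihomogeneous summand of Δ(fθ_I) (which has polynomial degree d−1 and exterior degree k−1, so the prefactor is the same (d+n−k)^{−1}). -/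
/-!
We model `A = R[x_1,…,x_n] ⊗ Λ_R[θ_1,…,θ_n]` over a field `R` of characteristic zero as the
free `R`-module on the monomial basis `(Fin n →₀ ℕ) × Finset (Fin n)`, a basis element
`(k, S)` representing `x^k ⊗ θ_S`.  `DeltaBV` is the BV Laplacian `Δ = ∑ i ∂_{x_i}∂_{θ_i}`.
`hBV` is the homotopy: on a bihomogeneous element of polynomial degree `d` and exterior
degree `k` it is `v ↦ (d + n - k)⁻¹ ∑ a, x_a · v · θ_a` (i.e. `h(f θ_I) =
(d+n-k)⁻¹ ∑ a x_a f θ_a θ_I`); on monomials: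
`hBV (x^m θ_S) = (deg m + n - #S)⁻¹ ∑_{a ∉ S} (-1)^{#{j ∈ S | j < a}} x^{m+e_a} θ_{S∪{a}}`.
The statement: for every element `v` supported on monomials of polynomial degree `d` and with
exterior factor exactly `θ_I`, if `#I < d + n` then `(Δ∘h + h∘Δ) v = v`.
-/

noncomputable section

variable (R : Type*) [Field R] [CharZero R] (n : ℕ)

/-- monomial basis of `R[x] ⊗ Λ[θ]` -/
abbrev BVBasis := (Fin n →₀ ℕ) × Finset (Fin n)

/-- the underlying module of `R[x] ⊗ Λ_R[θ]` -/
abbrev BVForms := BVBasis n →₀ R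

/-- the Koszul sign `(-1)^{#{j ∈ S | j < i}}` -/
def insSign (i : Fin n) (S : Finset (Fin n)) : R :=
  (-1) ^ (S.filter (· < i)).card

/-- extend a map defined on basis monomials to a linear endomorphism -/
def ofBasis (f : BVBasis n → BVForms R n) : BVForms R n →ₗ[R] BVForms R n :=
  Finsupp.lsum ℕ fun b => LinearMap.smulRight (LinearMap.id : R →ₗ[R] R) (f b)

/-- the BV Laplacian `Δ = ∑ i, ∂_{x_i} ∘ ∂_{θ_i}` -/
def DeltaBV : BVForms R n →ₗ[R] BVForms R n :=
  ofBasis R n fun b => ∑ i ∈ b.2,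
    ((b.1 i : R) * insSign R n i b.2) •
      Finsupp.single (b.1 - Finsupp.single i 1, b.2.erase i) (1 : R)

/-- the homotopy `h(f θ_I) = (d + n - #I)⁻¹ ∑ a, x_a f θ_a θ_I` -/
def hBV : BVForms R n →ₗ[R] BVForms R n :=
  ofBasis R n fun b =>
    ((((b.1.sum fun _ e => e) + n - b.2.card : ℕ) : R))⁻¹ •
      ∑ a ∈ b.2ᶜ,
        insSign R n a b.2 •
          Finsupp.single (b.1 + Finsupp.single a 1, insert a b.2) (1 : R)

/-!
Let `κ` be left multiplication by `∑ a, x_a θ_a`, so that `h = (d + n - k)⁻¹ κ` on the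
component of bidegree `(d, k)`. On a monomial `x^m θ_I`, the terms of `Δκ + κΔ` in which
`∂_{x_a}∂_{θ_a}` hits the factor `x_a θ_a` just inserted (for `a ∉ I`), or in which `x_i θ_i`
restores what `∂_{x_i}∂_{θ_i}` removed (for `i ∈ I`), add up to `(d + n - k) x^m θ_I`;
all other terms cancel in pairs because `θ_a` and `θ_i` anticommute.
Since `Δ` lowers both degrees by one, it preserves `d + n - k`, so the same prefactor appears
in `Δh` and in `hΔ`, and `Δh + hΔ = (d + n - k)⁻¹ (Δκ + κΔ) = id`.
-/

namespace BV

open Finsupp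

variable {R : Type*} [Field R] {n : ℕ}

lemma ofBasis_single (f : BVBasis n → BVForms R n) (b : BVBasis n) (c : R) :
    ofBasis R n f (single b c) = c • f b := by
  simp [ofBasis]

lemma insSign_mul_self (a : Fin n) (S : Finset (Fin n)) :
    insSign R n a S * insSign R n a S = 1 := by
  rw [insSign, ← pow_add]
  exact Even.neg_one_pow ⟨_, rfl⟩

lemma insSign_insert_self (a : Fin n) (S : Finset (Fin n)) :
    insSign R n a (insert a S) = insSign R n a S := by
  simp [insSign, Finset.filter_insert]

lemma insSign_erase_self (a : Fin n) (S : Finset (Fin n)) :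
    insSign R n a (S.erase a) = insSign R n a S := by
  rw [insSign, Finset.filter_erase, Finset.erase_eq_of_notMem (by simp), insSign]

/-- `θ_a θ_i = -θ_i θ_a`, read off on `θ_S` with `a ∉ S`, `i ∈ S`. -/
lemma insSign_anticomm {a i : Fin n} {S : Finset (Fin n)} (ha : a ∉ S)
    (hi : i ∈ S) :
    insSign R n a S * insSign R n i (insert a S) +
      insSign R n i S * insSign R n a (S.erase i) = 0 := by
  have hne : a ≠ i := fun h => ha (h ▸ hi)
  unfold insSign
  rw [Finset.filter_insert, Finset.filter_erase]
  rcases lt_or_gt_of_ne hne with h | h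
  · rw [if_pos h, Finset.card_insert_of_notMem (fun hmem => ha (Finset.mem_filter.mp hmem).1),
      Finset.erase_eq_of_notMem (by simp [h.le]), pow_succ]
    ring
  · rw [if_neg (by simp [h.le]), Finset.card_erase_of_mem (Finset.mem_filter.mpr ⟨hi, h⟩)]
    have hpos : 0 < (S.filter (· < a)).card :=
      Finset.card_pos.mpr ⟨i, Finset.mem_filter.mpr ⟨hi, h⟩⟩
    rw [← Nat.succ_pred_eq_of_pos hpos, pow_succ, Nat.succ_sub_one]
    ring

variable (R n) in
/-- Left multiplication by `∑ a, x_a θ_a`. -/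
def koszulMul : BVForms R n →ₗ[R] BVForms R n :=
  ofBasis R n fun b =>
    ∑ a ∈ b.2ᶜ, insSign R n a b.2 • single (b.1 + single a 1, insert a b.2) (1 : R)

lemma koszulMul_single (m : Fin n →₀ ℕ) (I : Finset (Fin n)) :
    koszulMul R n (single (m, I) 1) =
      ∑ a ∈ Iᶜ, insSign R n a I • single (m + single a 1, insert a I) (1 : R) := by
  rw [koszulMul, ofBasis_single, one_smul]

lemma DeltaBV_single (m : Fin n →₀ ℕ) (I : Finset (Fin n)) :
    DeltaBV R n (single (m, I) 1) =
      ∑ i ∈ I, ((m i : R) * insSign R n i I) • single (m - single i 1, I.erase i) (1 : R) := by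
  rw [DeltaBV, ofBasis_single, one_smul]

lemma hBV_single (m : Fin n →₀ ℕ) (I : Finset (Fin n)) :
    hBV R n (single (m, I) 1) =
      ((m.degree + n - I.card : ℕ) : R)⁻¹ • koszulMul R n (single (m, I) 1) := by
  rw [hBV, ofBasis_single, one_smul, koszulMul_single]
  rfl

lemma DeltaBV_koszulMul_single (m : Fin n →₀ ℕ) (I : Finset (Fin n)) :
    DeltaBV R n (koszulMul R n (single (m, I) 1)) =
      (∑ a ∈ Iᶜ, ((m a : R) + 1)) • single (m, I) 1 +
        ∑ a ∈ Iᶜ, ∑ i ∈ I, (insSign R n a I * insSign R n i (insert a I) * m i) •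
          single (m - single i 1 + single a 1, insert a (I.erase i)) 1 := by
  rw [koszulMul_single, map_sum, Finset.sum_smul, ← Finset.sum_add_distrib]
  refine Finset.sum_congr rfl fun a ha => ?_
  have ha : a ∉ I := Finset.mem_compl.mp ha
  rw [map_smul, DeltaBV_single, Finset.sum_insert ha, smul_add, Finset.smul_sum]
  congr 1
  · rw [Finsupp.add_apply, single_eq_same, insSign_insert_self, add_tsub_cancel_right,
      Finset.erase_insert ha, smul_smul, Nat.cast_add, Nat.cast_one,
      mul_left_comm, insSign_mul_self, mul_one]
  · refine Finset.sum_congr rfl fun i hi => ?_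
    have hne : a ≠ i := fun h => ha (h ▸ hi)
    rw [Finsupp.add_apply, single_eq_of_ne hne.symm, add_zero, smul_smul,
      Finset.erase_insert_of_ne hne,
      show m + single a 1 - single i 1 = m - single i 1 + single a 1 by
        ext j; simp only [coe_add, coe_tsub, Pi.add_apply, Pi.sub_apply, single_apply]
        split_ifs <;> omega]
    ring_nf

lemma koszulMul_DeltaBV_single (m : Fin n →₀ ℕ) (I : Finset (Fin n)) :
    koszulMul R n (DeltaBV R n (single (m, I) 1)) =
      (∑ i ∈ I, (m i : R)) • single (m, I) 1 +
        ∑ i ∈ I, ∑ a ∈ Iᶜ, (insSign R n i I * insSign R n a (I.erase i) * m i) •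
          single (m - single i 1 + single a 1, insert a (I.erase i)) 1 := by
  rw [DeltaBV_single, map_sum, Finset.sum_smul, ← Finset.sum_add_distrib]
  refine Finset.sum_congr rfl fun i hi => ?_
  rcases Nat.eq_zero_or_pos (m i) with h0 | h0
  · simp [h0]
  rw [map_smul, koszulMul_single, Finset.compl_erase, Finset.sum_insert (by simp [hi]),
    smul_add, Finset.smul_sum, insSign_erase_self, Finset.insert_erase hi,
    tsub_add_cancel_of_le (single_le_iff.mpr h0)]
  congr 1
  · rw [smul_smul, mul_assoc, insSign_mul_self, mul_one]
  · refine Finset.sum_congr rfl fun a _ => ?_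
    rw [smul_smul]
    ring_nf

lemma sum_compl_add_one_add_sum (m : Fin n →₀ ℕ) (I : Finset (Fin n)) :
    ∑ a ∈ Iᶜ, ((m a : R) + 1) + ∑ i ∈ I, (m i : R) = ((m.degree + n - I.card : ℕ) : R) := by
  have hcard : I.card ≤ n := by simpa using Finset.card_le_univ I
  have hsplit : ∑ i ∈ I, m i + ∑ a ∈ Iᶜ, m a = m.degree := by
    rw [Finset.sum_add_sum_compl, degree_eq_sum]
  rw [Nat.cast_sub (by omega), Finset.sum_add_distrib, Finset.sum_const, Finset.card_compl,
    Fintype.card_fin, ← hsplit, nsmul_one, Nat.cast_sub hcard]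
  push_cast
  ring

lemma DeltaBV_koszulMul_add_koszulMul_DeltaBV_single (m : Fin n →₀ ℕ) (I : Finset (Fin n)) :
    DeltaBV R n (koszulMul R n (single (m, I) 1)) +
        koszulMul R n (DeltaBV R n (single (m, I) 1)) =
      ((m.degree + n - I.card : ℕ) : R) • single (m, I) 1 := by
  have hcross :
      ∑ a ∈ Iᶜ, ∑ i ∈ I, (insSign R n a I * insSign R n i (insert a I) * m i) •
          single (m - single i 1 + single a 1, insert a (I.erase i)) (1 : R) +
        ∑ i ∈ I, ∑ a ∈ Iᶜ, (insSign R n i I * insSign R n a (I.erase i) * m i) •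
          single (m - single i 1 + single a 1, insert a (I.erase i)) (1 : R) = 0 := by
    rw [Finset.sum_comm (s := I), ← Finset.sum_add_distrib]
    refine Finset.sum_eq_zero fun a ha => ?_
    rw [← Finset.sum_add_distrib]
    refine Finset.sum_eq_zero fun i hi => ?_
    rw [← add_smul, ← add_mul,
      insSign_anticomm (Finset.mem_compl.mp ha) hi, zero_mul, zero_smul]
  rw [DeltaBV_koszulMul_single, koszulMul_DeltaBV_single, add_add_add_comm, ← add_smul, hcross,
    add_zero, sum_compl_add_one_add_sum]

lemma hBV_DeltaBV_single (m : Fin n →₀ ℕ) (I : Finset (Fin n)) :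
    hBV R n (DeltaBV R n (single (m, I) 1)) =
      ((m.degree + n - I.card : ℕ) : R)⁻¹ • koszulMul R n (DeltaBV R n (single (m, I) 1)) := by
  rw [DeltaBV_single, map_sum, map_sum, Finset.smul_sum]
  refine Finset.sum_congr rfl fun i hi => ?_
  rcases Nat.eq_zero_or_pos (m i) with h0 | h0
  · simp [h0]
  have hdeg : (m - single i 1).degree + 1 = m.degree := by
    conv_rhs => rw [← tsub_add_cancel_of_le (single_le_iff.mpr h0 : single i 1 ≤ m)]
    rw [map_add, degree_single]
  have hcard : (I.erase i).card + 1 = I.card := Finset.card_erase_add_one hi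
  have hD : (m - single i 1).degree + n - (I.erase i).card = m.degree + n - I.card := by omega
  rw [map_smul, map_smul, hBV_single, smul_comm, hD]

lemma DeltaBV_hBV_add_hBV_DeltaBV_single [CharZero R] {m : Fin n →₀ ℕ} {I : Finset (Fin n)}
    (hpos : I.card < m.degree + n) (c : R) :
    DeltaBV R n (hBV R n (single (m, I) c)) + hBV R n (DeltaBV R n (single (m, I) c)) =
      single (m, I) c := by
  have hD : ((m.degree + n - I.card : ℕ) : R) ≠ 0 := Nat.cast_ne_zero.mpr (by omega)
  have hbasis :
      DeltaBV R n (hBV R n (single (m, I) 1)) + hBV R n (DeltaBV R n (single (m, I) 1)) =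
        single (m, I) 1 := by
    rw [hBV_single, hBV_DeltaBV_single, map_smul, ← smul_add,
      DeltaBV_koszulMul_add_koszulMul_DeltaBV_single, smul_smul, inv_mul_cancel₀ hD, one_smul]
  rw [← smul_single_one, map_smul, map_smul, map_smul, map_smul, ← smul_add, hbasis]

end BV

/-- `Δ∘h + h∘Δ = id` on elements `f·θ_I` with `f` homogeneous of degree `d`,
provided `d + n - #I > 0`. -/
theorem bv_homotopy_identity (d : ℕ) (I : Finset (Fin n)) (v : BVForms R n)
    (hsupp : ∀ b ∈ v.support, (b.1.sum fun _ e => e) = d ∧ b.2 = I)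
    (hpos : I.card < d + n) :
    DeltaBV R n (hBV R n v) + hBV R n (DeltaBV R n v) = v := by
  set L := DeltaBV R n ∘ₗ hBV R n + hBV R n ∘ₗ DeltaBV R n
  have hL : ∀ b ∈ v.support, L (Finsupp.single b (v b)) = Finsupp.single b (v b) := by
    rintro ⟨m, S⟩ hb
    obtain ⟨hdeg, rfl⟩ := hsupp _ hb
    exact BV.DeltaBV_hBV_add_hBV_DeltaBV_single (by rwa [← hdeg] at hpos) _
  calc L v = v.sum fun b c => L (Finsupp.single b c) := by rw [← map_finsuppSum, v.sum_single]
    _ = v := (Finsupp.sum_congr hL).trans v.sum_single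

end
end

section
/- Let A = R[x_1,…,x_n] ⊗ Λ_R[θ_1,…,θ_n] over a field R of characteristic zero and Δ = Σ_i ∂_{x_i}∂_{θ_i}. Then the cohomology ker(Δ)/im(Δ) is a one-dimensional R-vector space generated by the class of θ_1 θ_2 ⋯ θ_n. In particular, an element c·θ_1⋯θ_n (c ∈ R) lies in im(Δ) only if c = 0, and every Δ-closed element of A is congruent modulo im(Δ) to c·θ_1⋯θ_n for a unique c ∈ R. -/
/-!
We model `A = R[x_1,…,x_n] ⊗ Λ_R[θ_1,…,θ_n]` over a field `R` of characteristic zero as the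
free `R`-module on the monomial basis `(Fin n →₀ ℕ) × Finset (Fin n)`, a basis element
`(k, S)` representing `x^k ⊗ θ_S`.  `DeltaBV` is the BV Laplacian `Δ = ∑ i ∂_{x_i}∂_{θ_i}`.

Let `κ` be multiplication by `∑ a, x_a θ_a`. On a monomial `x^k θ_S` one computes
`Δκ + κΔ = N`, where the weight `N = |k| + #{a ∉ S}` comes from the diagonal terms and the cross
terms cancel by the Koszul signs. Since `Δ` preserves `N`, and `θ_1 ⋯ θ_n` is the only monomial
of weight `0`, dividing `κ` by `N` (possible in characteristic zero) gives a homotopy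
`h` with `Δh + hΔ = id - π`, where `π` extracts the `θ_1 ⋯ θ_n`-component. That component
vanishes on `im Δ`, because `Δ` always removes a `θ`.
-/

noncomputable section

variable (R : Type*) [Field R] [CharZero R] (n : ℕ)

/-- the top odd monomial `θ_1 θ_2 ⋯ θ_n` -/
def topTheta : BVForms R n := Finsupp.single (0, Finset.univ) 1

lemma tsub_single_add_single {α : Type*} {k : α →₀ ℕ} {i : α} (hk : k i ≠ 0) :
    k - Finsupp.single i 1 + Finsupp.single i 1 = k :=
  tsub_add_cancel_of_le (Finsupp.single_le_iff.2 (Nat.one_le_iff_ne_zero.2 hk))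

lemma add_single_tsub_single_comm {α : Type*} (k : α →₀ ℕ) {a i : α} (hai : a ≠ i) :
    k + Finsupp.single a 1 - Finsupp.single i 1 = k - Finsupp.single i 1 + Finsupp.single a 1 := by
  classical
  ext j
  simp only [Finsupp.tsub_apply, Finsupp.add_apply, Finsupp.single_apply]
  split_ifs <;> grind

section

variable {K : Type*} [Field K] {n}

lemma ofBasis_single (f : BVBasis n → BVForms K n) (b : BVBasis n) (r : K) :
    ofBasis K n f (Finsupp.single b r) = r • f b := by
  simp [ofBasis]

lemma insSign_mul_self (i : Fin n) (S : Finset (Fin n)) :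
    insSign K n i S * insSign K n i S = 1 := by
  simp [insSign, ← pow_add, ← two_mul, pow_mul]

lemma insSign_insert_self (i : Fin n) (S : Finset (Fin n)) :
    insSign K n i (insert i S) = insSign K n i S := by
  simp [insSign, Finset.filter_insert]

lemma insSign_erase_self (i : Fin n) (S : Finset (Fin n)) :
    insSign K n i (S.erase i) = insSign K n i S := by
  simp [insSign, Finset.filter_erase]

lemma insSign_insert_of_notMem {a : Fin n} {S : Finset (Fin n)} (ha : a ∉ S) (i : Fin n) :
    insSign K n i (insert a S) = (if a < i then -1 else 1) * insSign K n i S := by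
  unfold insSign
  rw [Finset.filter_insert]
  split_ifs with h
  · rw [Finset.card_insert_of_notMem (by simp [ha]), pow_succ, mul_comm]
  · rw [one_mul]

/-- Inserting `a` and removing `i` anticommute; this is what makes the cross terms of
`Δ ∘ κ + κ ∘ Δ` cancel. -/
lemma insSign_cross {a i : Fin n} {S : Finset (Fin n)} (ha : a ∉ S) (hi : i ∈ S) :
    insSign K n a S * insSign K n i (insert a S) +
      insSign K n i S * insSign K n a (S.erase i) = 0 := by
  have hai : a ≠ i := fun h => ha (h ▸ hi)
  have hS : insSign K n a S = (if i < a then -1 else 1) * insSign K n a (S.erase i) := by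
    conv_lhs => rw [← Finset.insert_erase hi]
    exact insSign_insert_of_notMem (Finset.notMem_erase i S) a
  rw [hS, insSign_insert_of_notMem ha]
  rcases hai.lt_or_gt with h | h <;> simp only [h, h.not_gt, ↓reduceIte] <;> ring

def eulerWeight (b : BVBasis n) : ℕ := b.1.degree + b.2ᶜ.card

lemma eulerWeight_eq_zero_iff {b : BVBasis n} : eulerWeight b = 0 ↔ b = (0, Finset.univ) := by
  obtain ⟨k, S⟩ := b
  simp [eulerWeight, Finsupp.degree_eq_zero_iff]

lemma eulerWeight_lower {k : Fin n →₀ ℕ} {S : Finset (Fin n)} {i : Fin n} (hi : i ∈ S)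
    (hk : k i ≠ 0) : eulerWeight (k - Finsupp.single i 1, S.erase i) = eulerWeight (k, S) := by
  have hdeg : (k - Finsupp.single i 1).degree + 1 = k.degree := by
    conv_rhs => rw [← tsub_single_add_single hk]
    rw [map_add, Finsupp.degree_single]
  have hcard : (S.erase i)ᶜ.card = Sᶜ.card + 1 := by
    rw [Finset.compl_erase, Finset.card_insert_of_notMem (by simp [hi])]
  simp only [eulerWeight, hcard]
  omega

lemma sum_compl_add_sum_eq_eulerWeight (k : Fin n →₀ ℕ) (S : Finset (Fin n)) :
    ∑ a ∈ Sᶜ, ((k a : K) + 1) + ∑ i ∈ S, (k i : K) = eulerWeight (k, S) := by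
  rw [Finset.sum_add_distrib, add_right_comm, Finset.sum_compl_add_sum, eulerWeight,
    Finsupp.degree_eq_sum]
  simp [add_comm]

/-- Multiplication by `∑ a, x_a θ_a`. -/
def koszul (K : Type*) [Field K] (n : ℕ) : BVForms K n →ₗ[K] BVForms K n :=
  ofBasis K n fun b => ∑ a ∈ b.2ᶜ,
    insSign K n a b.2 • Finsupp.single (b.1 + Finsupp.single a 1, insert a b.2) 1

lemma insSign_smul_DeltaBV_raise {k : Fin n →₀ ℕ} {S : Finset (Fin n)} {a : Fin n} (ha : a ∉ S) :
    insSign K n a S • DeltaBV K n (Finsupp.single (k + Finsupp.single a 1, insert a S) 1) =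
      ((k a : K) + 1) • Finsupp.single (k, S) 1 + ∑ i ∈ S,
        ((k i : K) * (insSign K n a S * insSign K n i (insert a S))) •
          Finsupp.single (k - Finsupp.single i 1 + Finsupp.single a 1, insert a (S.erase i)) 1 := by
  rw [DeltaBV, ofBasis_single, one_smul, Finset.sum_insert ha, smul_add, Finset.smul_sum]
  congr 1
  · simp only [Finsupp.add_apply, Finsupp.single_eq_same, add_tsub_cancel_right,
      Finset.erase_insert ha, insSign_insert_self, smul_smul, Nat.cast_add, Nat.cast_one]
    rw [mul_left_comm, insSign_mul_self, mul_one]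
  · refine Finset.sum_congr rfl fun i hi => ?_
    have hai : a ≠ i := fun h => ha (h ▸ hi)
    simp only [smul_smul, Finsupp.add_apply, Finsupp.single_eq_of_ne' hai, add_zero,
      add_single_tsub_single_comm k hai, Finset.erase_insert_of_ne hai]
    congr 1
    ring

lemma insSign_smul_koszul_lower {k : Fin n →₀ ℕ} {S : Finset (Fin n)} {i : Fin n} (hi : i ∈ S)
    (hk : k i ≠ 0) :
    insSign K n i S • koszul K n (Finsupp.single (k - Finsupp.single i 1, S.erase i) 1) =
      Finsupp.single (k, S) 1 + ∑ a ∈ Sᶜ,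
        (insSign K n i S * insSign K n a (S.erase i)) •
          Finsupp.single (k - Finsupp.single i 1 + Finsupp.single a 1, insert a (S.erase i)) 1 := by
  rw [koszul, ofBasis_single, one_smul, Finset.compl_erase, Finset.sum_insert (by simp [hi]),
    smul_add, Finset.smul_sum]
  congr 1
  · rw [smul_smul, insSign_erase_self, insSign_mul_self, one_smul, tsub_single_add_single hk,
      Finset.insert_erase hi]
  · simp only [smul_smul]

lemma DeltaBV_koszul_single (k : Fin n →₀ ℕ) (S : Finset (Fin n)) :
    DeltaBV K n (koszul K n (Finsupp.single (k, S) 1)) =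
      (∑ a ∈ Sᶜ, ((k a : K) + 1)) • Finsupp.single (k, S) 1 + ∑ a ∈ Sᶜ, ∑ i ∈ S,
        ((k i : K) * (insSign K n a S * insSign K n i (insert a S))) •
          Finsupp.single (k - Finsupp.single i 1 + Finsupp.single a 1, insert a (S.erase i)) 1 := by
  rw [koszul, ofBasis_single, one_smul, map_sum, Finset.sum_smul, ← Finset.sum_add_distrib]
  refine Finset.sum_congr rfl fun a ha => ?_
  rw [map_smul, insSign_smul_DeltaBV_raise (Finset.mem_compl.1 ha)]

lemma koszul_DeltaBV_single (k : Fin n →₀ ℕ) (S : Finset (Fin n)) :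
    koszul K n (DeltaBV K n (Finsupp.single (k, S) 1)) =
      (∑ i ∈ S, (k i : K)) • Finsupp.single (k, S) 1 + ∑ a ∈ Sᶜ, ∑ i ∈ S,
        ((k i : K) * (insSign K n i S * insSign K n a (S.erase i))) •
          Finsupp.single (k - Finsupp.single i 1 + Finsupp.single a 1, insert a (S.erase i)) 1 := by
  rw [DeltaBV, ofBasis_single, one_smul, map_sum, Finset.sum_comm (s := Sᶜ), Finset.sum_smul,
    ← Finset.sum_add_distrib]
  refine Finset.sum_congr rfl fun i hi => ?_
  rw [map_smul, mul_smul]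
  by_cases hk : k i = 0
  · simp [hk]
  · rw [insSign_smul_koszul_lower hi hk, smul_add, Finset.smul_sum]
    simp only [smul_smul]

lemma DeltaBV_koszul_add_koszul_DeltaBV_single (b : BVBasis n) :
    DeltaBV K n (koszul K n (Finsupp.single b 1)) + koszul K n (DeltaBV K n (Finsupp.single b 1)) =
      (eulerWeight b : K) • Finsupp.single b 1 := by
  obtain ⟨k, S⟩ := b
  rw [DeltaBV_koszul_single, koszul_DeltaBV_single, add_add_add_comm, ← add_smul,
    sum_compl_add_sum_eq_eulerWeight, ← Finset.sum_add_distrib, add_eq_left]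
  refine Finset.sum_eq_zero fun a ha => Finset.sum_add_distrib.symm.trans ?_
  refine Finset.sum_eq_zero fun i hi => ?_
  rw [← add_smul, ← mul_add, insSign_cross (Finset.mem_compl.1 ha) hi, mul_zero, zero_smul]

def diagonalOp (K : Type*) [Field K] (n : ℕ) (f : BVBasis n → K) :
    BVForms K n →ₗ[K] BVForms K n :=
  ofBasis K n fun b => Finsupp.single b (f b)

lemma diagonalOp_single (f : BVBasis n → K) (b : BVBasis n) (r : K) :
    diagonalOp K n f (Finsupp.single b r) = f b • Finsupp.single b r := by
  rw [diagonalOp, ofBasis_single, Finsupp.smul_single, Finsupp.smul_single, smul_eq_mul,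
    smul_eq_mul, mul_comm]

lemma diagonalOp_comp_diagonalOp (f g : BVBasis n → K) :
    diagonalOp K n f ∘ₗ diagonalOp K n g = diagonalOp K n (f * g) := by
  ext b
  simp [diagonalOp_single]

lemma DeltaBV_comp_koszul_add_koszul_comp_DeltaBV :
    DeltaBV K n ∘ₗ koszul K n + koszul K n ∘ₗ DeltaBV K n =
      diagonalOp K n fun b => (eulerWeight b : K) := by
  ext b
  simp [DeltaBV_koszul_add_koszul_DeltaBV_single, diagonalOp_single]

lemma DeltaBV_comp_diagonalOp {f : BVBasis n → K}
    (hf : ∀ k S i, i ∈ S → k i ≠ 0 → f (k - Finsupp.single i 1, S.erase i) = f (k, S)) :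
    DeltaBV K n ∘ₗ diagonalOp K n f = diagonalOp K n f ∘ₗ DeltaBV K n := by
  ext ⟨k, S⟩ : 2
  simp only [LinearMap.coe_comp, Function.comp_apply, Finsupp.lsingle_apply, diagonalOp_single,
    map_smul, DeltaBV, ofBasis_single, one_smul, map_sum, Finset.smul_sum]
  refine Finset.sum_congr rfl fun i hi => ?_
  by_cases hk : k i = 0
  · simp [hk]
  · rw [hf k S i hi hk, smul_comm]

/-- The paper's homotopy `h(fθ_I) = ∑_a (∫_0^1 t^{n-|I|-1} x_a f(tx) dt) θ_a θ_I`: on `x^k θ_S`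
the integral is `1 / eulerWeight (k, S)`. -/
def bvHomotopy (K : Type*) [Field K] (n : ℕ) : BVForms K n →ₗ[K] BVForms K n :=
  koszul K n ∘ₗ diagonalOp K n fun b => (eulerWeight b : K)⁻¹

lemma diagonalOp_eulerWeight_mul_inv [CharZero K] :
    diagonalOp K n ((fun b => (eulerWeight b : K)) * fun b => (eulerWeight b : K)⁻¹) =
      LinearMap.id - (Finsupp.lapply (0, Finset.univ)).smulRight (topTheta K n) := by
  ext b : 2
  by_cases hb : b = (0, Finset.univ)
  · subst hb
    simp [diagonalOp_single, eulerWeight, topTheta]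
  · have hN : (eulerWeight b : K) ≠ 0 := Nat.cast_ne_zero.2 (mt eulerWeight_eq_zero_iff.1 hb)
    simp [diagonalOp_single, hN, Ne.symm hb]

lemma DeltaBV_comp_bvHomotopy_add_bvHomotopy_comp_DeltaBV [CharZero K] :
    DeltaBV K n ∘ₗ bvHomotopy K n + bvHomotopy K n ∘ₗ DeltaBV K n =
      LinearMap.id - (Finsupp.lapply (0, Finset.univ)).smulRight (topTheta K n) := by
  have hcomm : DeltaBV K n ∘ₗ diagonalOp K n (fun b => (eulerWeight b : K)⁻¹) =
      diagonalOp K n (fun b => (eulerWeight b : K)⁻¹) ∘ₗ DeltaBV K n :=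
    DeltaBV_comp_diagonalOp fun k S i hi hk => by rw [eulerWeight_lower hi hk]
  rw [bvHomotopy, LinearMap.comp_assoc, ← hcomm, ← LinearMap.comp_assoc, ← LinearMap.comp_assoc,
    ← LinearMap.add_comp, DeltaBV_comp_koszul_add_koszul_comp_DeltaBV,
    diagonalOp_comp_diagonalOp, diagonalOp_eulerWeight_mul_inv]

lemma DeltaBV_apply_zero_univ (w : BVForms K n) : DeltaBV K n w (0, Finset.univ) = 0 := by
  induction w using Finsupp.induction_linear with
  | zero => simp
  | add v w hv hw => simp [hv, hw]
  | single b r =>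
    have hS : ∀ i, b.2.erase i ≠ Finset.univ := fun i h =>
      Finset.notMem_erase i b.2 (h ▸ Finset.mem_univ i)
    simp [DeltaBV, ofBasis_single, hS]

lemma eq_zero_of_smul_topTheta_eq_DeltaBV {c : K} {w : BVForms K n}
    (h : c • topTheta K n = DeltaBV K n w) : c = 0 := by
  simpa [topTheta, DeltaBV_apply_zero_univ] using congr($h (0, Finset.univ))

end

/-- The cohomology of the BV Laplacian is one-dimensional, generated by `θ_1⋯θ_n`. -/
theorem bv_cohomology :
    (∀ (c : R) (w : BVForms R n), c • topTheta R n = DeltaBV R n w → c = 0)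
    ∧ (∀ v : BVForms R n, DeltaBV R n v = 0 →
        ∃! c : R, ∃ w : BVForms R n, v = c • topTheta R n + DeltaBV R n w) := by
  refine ⟨fun c w => eq_zero_of_smul_topTheta_eq_DeltaBV, fun v hv => ?_⟩
  have hhom : DeltaBV R n (bvHomotopy R n v) = v - v (0, Finset.univ) • topTheta R n := by
    simpa [hv] using
      LinearMap.congr_fun DeltaBV_comp_bvHomotopy_add_bvHomotopy_comp_DeltaBV v
  refine ⟨v (0, Finset.univ), ⟨bvHomotopy R n v, by rw [hhom, add_sub_cancel]⟩, ?_⟩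
  rintro c ⟨w, hw⟩
  refine sub_eq_zero.1 (eq_zero_of_smul_topTheta_eq_DeltaBV (w := bvHomotopy R n v - w) ?_)
  rw [map_sub, hhom, sub_smul, hw]
  abel

end
end
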